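/- arXiv:1404.0002 — 3 statements merged into one kernel-verified Lean document; each statement's English description precedes it below -/
import Mathlib

section
/- Let K be a field, q ∈ K a nonzero element, R an associative unital K-algebra, and x, d ∈ R satisfying d·x = q·(x·d) + 1. Set θ := x·d and, for j ∈ ℕ, [j]_q := Σ_{i=0}^{j−1} q^i. Then for every m ≥ 1: q^{T_{m−1}}·x^m·d^m = ∏_{j=0}^{m−1} (θ − [j]_q·1), where T_{m−1} := (m−1)m/2 is the (m−1)-st triangular number; equivalently x^m·d^m = q^{−T_{m−1}} ∏_{j=0}^{m−1} (θ − [j]_q·1). -/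
/-!
Commuting `d` past `x` in the word `x^k d^k · x d` costs a factor `q^k` and produces the
correction term `[k]_q x^k d^k`, so `x^k d^k (θ - [k]_q) = q^k x^{k+1} d^{k+1}`.
Multiplying these relations for `k < m` gives the product, with total weight
`q^{0 + 1 + ⋯ + (m-1)} = q^{T_{m-1}}`.
-/

open Finset

section QWeyl

variable {K R : Type*} [CommSemiring K] [Ring R] [Algebra K R] {q : K} {x d : R}

theorem qWeyl_pow_mul_mul (hrel : d * x = q • (x * d) + 1) (k : ℕ) :
    d ^ k * x * d = q ^ k • (x * d ^ (k + 1)) + (∑ i ∈ range k, q ^ i) • d ^ k := by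
  induction k with
  | zero => simp
  | succ k ih =>
    calc d ^ (k + 1) * x * d = d * (d ^ k * x * d) := by simp only [pow_succ', mul_assoc]
      _ = q ^ k • ((d * x) * d ^ (k + 1)) + (∑ i ∈ range k, q ^ i) • d ^ (k + 1) := by
        rw [ih, mul_add, mul_smul_comm, mul_smul_comm, ← mul_assoc, ← pow_succ']
      _ = q ^ (k + 1) • (x * d ^ (k + 2)) + (∑ i ∈ range (k + 1), q ^ i) • d ^ (k + 1) := by
        rw [hrel, add_mul, one_mul, smul_mul_assoc, mul_assoc, ← pow_succ', smul_add, smul_smul,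
          ← pow_succ, sum_range_succ, add_smul]
        abel

theorem qWeyl_pow_mul_pow_mul_sub (hrel : d * x = q • (x * d) + 1) (k : ℕ) :
    x ^ k * d ^ k * (x * d - (∑ i ∈ range k, q ^ i) • (1 : R))
      = q ^ k • (x ^ (k + 1) * d ^ (k + 1)) := by
  have hword : x ^ k * d ^ k * (x * d) = x ^ k * (d ^ k * x * d) := by simp only [mul_assoc]
  rw [mul_sub, mul_smul_one, hword, qWeyl_pow_mul_mul hrel, mul_add, mul_smul_comm,
    mul_smul_comm, ← mul_assoc, ← pow_succ, add_sub_cancel_right]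

theorem qWeyl_smul_pow_mul_pow_eq_prod (hrel : d * x = q • (x * d) + 1) (n : ℕ) :
    q ^ (∑ i ∈ range n, i) • (x ^ n * d ^ n)
      = ((List.range n).map fun j : ℕ => x * d - (∑ i ∈ range j, q ^ i) • (1 : R)).prod := by
  induction n with
  | zero => simp
  | succ n ih =>
    rw [List.prod_range_succ, ← ih, smul_mul_assoc, qWeyl_pow_mul_pow_mul_sub hrel, smul_smul,
      ← pow_add, sum_range_succ]

end QWeyl

theorem xm_dm_eq_prod_theta_qWeyl_general {K : Type*} [Field K] {R : Type*} [Ring R] [Algebra K R]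
    (q : K) (x d : R) (hrel : d * x = q • (x * d) + 1)
    (m : ℕ) :
    q ^ ((m - 1) * m / 2) • (x ^ m * d ^ m)
      = ((List.range m).map fun j : ℕ =>
          (x * d) - (∑ i ∈ Finset.range j, q ^ i) • (1 : R)).prod := by
  rw [← qWeyl_smul_pow_mul_pow_eq_prod hrel, sum_range_id, Nat.mul_comm]

/-- Let `K` be a field, `q ∈ K` nonzero, `R` an associative unital
`K`-algebra, and `x, d ∈ R` with `d·x = q·(x·d) + 1`.  With `θ := x·d`,
`[j]_q := ∑_{i=0}^{j−1} q^i` and `T_{m−1} := (m−1)m/2`, for every `m ≥ 1`: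
`q^{T_{m−1}}·x^m·d^m = ∏_{j=0}^{m−1} (θ − [j]_q·1)`. -/
theorem xm_dm_eq_prod_theta_qWeyl {K : Type*} [Field K] {R : Type*} [Ring R] [Algebra K R]
    (q : K) (hq : q ≠ 0) (x d : R) (hrel : d * x = q • (x * d) + 1)
    (m : ℕ) (hm : 1 ≤ m) :
    q ^ ((m - 1) * m / 2) • (x ^ m * d ^ m)
      = ((List.range m).map fun j : ℕ =>
          (x * d) - (∑ i ∈ Finset.range j, q ^ i) • (1 : R)).prod :=
  xm_dm_eq_prod_theta_qWeyl_general q x d hrel m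
end

section
/- The family of operators {X^a ∘ D^b : a, b ∈ ℕ^n} is linearly independent over K in the endomorphism algebra of K[x_1,…,x_n]; consequently every element of A_n has a unique representation Σ c_{a,b} X^a ∘ D^b with c_{a,b} ∈ K, almost all zero. -/
open MvPolynomial

/-- Multiplication by the variable `x i`, as a `K`-linear endomorphism of
`K[x_1,…,x_n]`. -/
noncomputable def Xop (K : Type) [Field K] {n : ℕ} (i : Fin n) :
    Module.End K (MvPolynomial (Fin n) K) :=
  LinearMap.mulLeft K (X i)

/-- The `i`-th partial derivative, as a `K`-linear endomorphism of `K[x_1,…,x_n]`. -/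
noncomputable def Dop (K : Type) [Field K] {n : ℕ} (i : Fin n) :
    Module.End K (MvPolynomial (Fin n) K) :=
  (pderiv i).toLinearMap

/-- `X^a := X_1^{a_1} ∘ ⋯ ∘ X_n^{a_n}`. -/
noncomputable def Xpow (K : Type) [Field K] {n : ℕ} (a : Fin n → ℕ) :
    Module.End K (MvPolynomial (Fin n) K) :=
  (List.ofFn fun i => Xop K i ^ a i).prod

/-- `D^b := D_1^{b_1} ∘ ⋯ ∘ D_n^{b_n}`. -/
noncomputable def Dpow (K : Type) [Field K] {n : ℕ} (b : Fin n → ℕ) :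
    Module.End K (MvPolynomial (Fin n) K) :=
  (List.ofFn fun i => Dop K i ^ b i).prod

/-- The `n`-th Weyl algebra `A_n`, realized as the `K`-subalgebra of
`End_K(K[x_1,…,x_n])` generated by `X_1,…,X_n, D_1,…,D_n`. -/
noncomputable def WeylAlg (K : Type) [Field K] (n : ℕ) :
    Subalgebra K (Module.End K (MvPolynomial (Fin n) K)) :=
  Algebra.adjoin K (Set.range (Xop K (n := n)) ∪ Set.range (Dop K (n := n)))

/-- The `i`-th Euler operator `θ_i := X_i ∘ D_i`. -/
noncomputable def thetaOp (K : Type) [Field K] {n : ℕ} (i : Fin n) :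
    Module.End K (MvPolynomial (Fin n) K) :=
  Xop K i * Dop K i

/-- Evaluation `f ↦ f(θ_1,…,θ_n)` of a polynomial `f ∈ K[t_1,…,t_n]` at the (pairwise
commuting) Euler operators. -/
noncomputable def thetaEval (K : Type) [Field K] {n : ℕ}
    (f : MvPolynomial (Fin n) K) : Module.End K (MvPolynomial (Fin n) K) :=
  ∑ m ∈ f.support, f.coeff m • (List.ofFn fun i => thetaOp K i ^ m i).prod

/-- The `z`-th graded part `A_n^{(z)}`: the `K`-linear span of the operators
`X^a ∘ D^b` with `b − a = z` componentwise. -/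
noncomputable def gradePart (K : Type) [Field K] {n : ℕ} (z : Fin n → ℤ) :
    Submodule K (Module.End K (MvPolynomial (Fin n) K)) :=
  Submodule.span K
    {F | ∃ a b : Fin n → ℕ, (∀ i, (b i : ℤ) - (a i : ℤ) = z i) ∧ F = Xpow K a * Dpow K b}

/-- `e(z)_i := −z_i` if `z_i < 0`, and `0` otherwise. -/
def ez {n : ℕ} (z : Fin n → ℤ) : Fin n → ℕ := fun i => (-(z i)).toNat

/-- `w(z)_i := z_i` if `z_i > 0`, and `0` otherwise. -/
def wz {n : ℕ} (z : Fin n → ℤ) : Fin n → ℕ := fun i => (z i).toNat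


/-! On monomials, `X^a ∘ D^b` acts by `x^s ↦ (∏ᵢ s_i (s_i - 1) ⋯ (s_i - b_i + 1)) x^(a + s - b)`,
and the coefficient vanishes unless `b ≤ s`. Given a vanishing combination `∑ c_{a,b} X^a ∘ D^b`,
apply it to `x^t` and read off the coefficient of `x^a`: once all `c_{a',b}` with `b < t` are known
to vanish, only `c_{a,t} · ∏ᵢ t_i!` is left, so well-founded induction on `t` and characteristic
zero give `c = 0`. For spanning, the span of the `X^a ∘ D^b` contains `1` and is stable under left
multiplication by the generators: `X_i X^a = X^(a + e_i)` and, by Leibniz,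
`D_i X^a = X^a D_i + a_i X^(a - e_i)`. -/

namespace List

theorem prod_ofFn_pow_add {M : Type*} [Monoid M] {n : ℕ} {f : Fin n → M}
    (hf : ∀ i j, Commute (f i) (f j)) (b c : Fin n → ℕ) :
    (ofFn fun i => f i ^ (b i + c i)).prod
      = (ofFn fun i => f i ^ b i).prod * (ofFn fun i => f i ^ c i).prod := by
  induction n with
  | zero => simp
  | succ n ih =>
    have hcomm : Commute (f 0 ^ c 0) (ofFn fun i : Fin n => f i.succ ^ b i.succ).prod :=
      Commute.list_prod_right _ _ fun x hx => by
        obtain ⟨i, rfl⟩ := mem_ofFn.mp hx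
        exact (hf 0 i.succ).pow_pow _ _
    simp only [ofFn_succ, prod_cons]
    rw [ih (fun i j => hf i.succ j.succ) (fun i => b i.succ) (fun i => c i.succ), pow_add,
      mul_assoc, ← mul_assoc (f 0 ^ c 0), hcomm.eq]
    simp only [mul_assoc]

theorem prod_ofFn_pow_single {M : Type*} [Monoid M] {n : ℕ} (f : Fin n → M) (i : Fin n)
    (k : ℕ) :
    (ofFn fun j => f j ^ Pi.single i k j).prod = f i ^ k := by
  rw [ofFn_eq_map, prod_map_eq_pow_single i _ fun j hj _ => by simp [hj], count_finRange]
  simp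

end List

theorem Algebra.adjoin_le_of_mul_mem {R A : Type*} [CommSemiring R] [Semiring A] [Algebra R A]
    {s : Set A} {M : Submodule R A} (one_mem : 1 ∈ M)
    (mul_mem : ∀ x ∈ s, ∀ y ∈ M, x * y ∈ M) :
    Subalgebra.toSubmodule (Algebra.adjoin R s) ≤ M := by
  intro w hw
  suffices key : ∀ y ∈ M, w * y ∈ M by simpa using key 1 one_mem
  induction hw using Algebra.adjoin_induction with
  | mem x hx => exact mul_mem x hx
  | algebraMap r =>
    intro y hy
    rw [Algebra.algebraMap_eq_smul_one, smul_mul_assoc, one_mul]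
    exact M.smul_mem r hy
  | add x x' _ _ hx hx' => exact fun y hy => add_mul x x' y ▸ M.add_mem (hx y hy) (hx' y hy)
  | mul x x' _ _ hx hx' => exact fun y hy => (mul_assoc x x' y).symm ▸ hx _ (hx' y hy)

theorem MvPolynomial.pderiv_pderiv_comm {R σ : Type*} [CommRing R] (i j : σ)
    (p : MvPolynomial σ R) : pderiv i (pderiv j p) = pderiv j (pderiv i p) := by
  classical
  have h : ⁅(pderiv i : Derivation R (MvPolynomial σ R) (MvPolynomial σ R)), pderiv j⁆ = 0 :=
    derivation_ext fun k => by
      rw [Derivation.commutator_apply]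
      simp only [pderiv_X, Pi.single_apply]
      split_ifs <;> simp
  rw [← sub_eq_zero, ← Derivation.commutator_apply, h, Derivation.zero_apply]

section

variable {K : Type} [Field K] {n : ℕ}

theorem commute_Dop (i j : Fin n) : Commute (Dop K i) (Dop K j) :=
  LinearMap.ext (MvPolynomial.pderiv_pderiv_comm i j)

theorem Xpow_zero : Xpow K (0 : Fin n → ℕ) = 1 := by
  simp [Xpow]

theorem Dpow_zero : Dpow K (0 : Fin n → ℕ) = 1 := by
  simp [Dpow]

theorem Dpow_add (b c : Fin n → ℕ) : Dpow K (b + c) = Dpow K b * Dpow K c :=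
  List.prod_ofFn_pow_add commute_Dop b c

theorem Dpow_single (i : Fin n) (k : ℕ) : Dpow K (Pi.single i k) = Dop K i ^ k :=
  List.prod_ofFn_pow_single _ i k

theorem Xpow_eq_mulLeft (a : Fin n →₀ ℕ) : Xpow K a = LinearMap.mulLeft K (monomial a 1) := by
  have : Xpow K a = Algebra.lmul K _ (∏ i, X i ^ a i) := by
    simp only [Xpow, ← Fin.prod_ofFn, map_list_prod, List.map_ofFn, Function.comp_def, map_pow]
    rfl
  rw [this, monomial_eq, C_1, one_mul, Finsupp.prod_fintype _ _ (by simp)]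
  rfl

theorem Dop_pow_apply_monomial (i : Fin n) (k : ℕ) (s : Fin n →₀ ℕ) (c : K) :
    (Dop K i ^ k) (monomial s c)
      = monomial (s - Finsupp.single i k) (c * (s i).descFactorial k) := by
  induction k with
  | zero => simp
  | succ k ih =>
    rw [pow_succ', Module.End.mul_apply, ih, Dop, Derivation.coeFn_coe, pderiv_monomial,
      tsub_tsub, ← Finsupp.single_add, Finsupp.tsub_apply, Finsupp.single_eq_same,
      Nat.descFactorial_succ]
    congr 1
    push_cast
    ring

theorem Dpow_apply_monomial (t s : Fin n →₀ ℕ) (c : K) :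
    Dpow K t (monomial s c) = monomial (s - t) (c * ∏ i, ((s i).descFactorial (t i) : K)) := by
  induction t using Finsupp.induction_linear generalizing s c with
  | zero => simp [Dpow_zero]
  | add f g hf hg =>
    rw [Finsupp.coe_add, Dpow_add, Module.End.mul_apply, hg, hf, tsub_tsub, add_comm g f,
      mul_assoc, ← Finset.prod_mul_distrib]
    congr 3 with i
    rw [Finsupp.tsub_apply, ← Nat.cast_mul, Pi.add_apply,
      ← Nat.descFactorial_mul_descFactorial (Nat.le_add_left (g i) (f i)), Nat.add_sub_cancel,
      mul_comm]
  | single i k =>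
    rw [Finsupp.single_eq_pi_single, Dpow_single, Dop_pow_apply_monomial,
      ← Finsupp.single_eq_pi_single,
      Fintype.prod_eq_single i fun j hj => by simp [Finsupp.single_eq_of_ne hj],
      Finsupp.single_eq_same]

theorem Xpow_mul_Dpow_apply_monomial (a t s : Fin n →₀ ℕ) (c : K) :
    (Xpow K a * Dpow K t) (monomial s c)
      = monomial (a + (s - t)) (c * ∏ i, ((s i).descFactorial (t i) : K)) := by
  rw [Module.End.mul_apply, Dpow_apply_monomial, Xpow_eq_mulLeft, LinearMap.mulLeft_apply,
    monomial_mul, one_mul]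

theorem linearIndependent_Xpow_mul_Dpow [CharZero K] :
    LinearIndependent K fun p : (Fin n →₀ ℕ) × (Fin n →₀ ℕ) => Xpow K p.1 * Dpow K p.2 := by
  rw [linearIndependent_iff']
  intro s g hsum
  suffices h : ∀ t a, (a, t) ∈ s → g (a, t) = 0 from fun p hp => h p.2 p.1 hp
  intro t
  induction t using WellFoundedLT.induction with
  | ind t ih =>
    intro a ha
    have hcoeff := congr(coeff a ($hsum (monomial t 1)))
    simp only [LinearMap.coe_sum, Finset.sum_apply, LinearMap.smul_apply, coeff_sum, coeff_smul,
      LinearMap.zero_apply, coeff_zero, Xpow_mul_Dpow_apply_monomial, coeff_monomial] at hcoeff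
    rw [Finset.sum_eq_single_of_mem (a, t) ha] at hcoeff
    · simpa [Nat.descFactorial_self, Finset.prod_eq_zero_iff, Nat.factorial_ne_zero] using hcoeff
    · rintro ⟨a', t'⟩ hp hne
      by_cases hle : t' ≤ t
      · rcases hle.lt_or_eq with hlt | rfl
        · simp [ih t' hlt a' hp]
        · simp_all
      · obtain ⟨i, hi⟩ : ∃ i, t i < t' i := by simpa [Finsupp.le_def] using hle
        have hzero : ∏ j, ((t j).descFactorial (t' j) : K) = 0 :=
          Finset.prod_eq_zero (Finset.mem_univ i)
            (by simp [Nat.descFactorial_eq_zero_iff_lt.mpr hi])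
        simp [hzero]

theorem Xop_mul_Xpow (i : Fin n) (a : Fin n →₀ ℕ) :
    Xop K i * Xpow K a = Xpow K ⇑(Finsupp.single i 1 + a : Fin n →₀ ℕ) := by
  rw [Xpow_eq_mulLeft, Xpow_eq_mulLeft, Xop, Module.End.mul_eq_comp, ← LinearMap.mulLeft_mul, X,
    monomial_mul, one_mul]

theorem Dop_mul_mulLeft (i : Fin n) (p : MvPolynomial (Fin n) K) :
    Dop K i * LinearMap.mulLeft K p
      = LinearMap.mulLeft K p * Dop K i + LinearMap.mulLeft K (pderiv i p) := by
  refine LinearMap.ext fun q => ?_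
  simp only [Module.End.mul_apply, LinearMap.add_apply, LinearMap.mulLeft_apply, Dop,
    Derivation.coeFn_coe, pderiv_mul]
  ring

-- When `a i = 0`, the truncated `a - single i 1` is harmless: its coefficient vanishes.
theorem Dop_mul_Xpow (i : Fin n) (a : Fin n →₀ ℕ) :
    Dop K i * Xpow K a
      = Xpow K a * Dop K i + (a i : K) • Xpow K ⇑(a - Finsupp.single i 1 : Fin n →₀ ℕ) := by
  rw [Xpow_eq_mulLeft, Dop_mul_mulLeft, pderiv_monomial, one_mul, Xpow_eq_mulLeft]
  congr 1
  refine LinearMap.ext fun q => ?_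
  rw [LinearMap.smul_apply, LinearMap.mulLeft_apply, LinearMap.mulLeft_apply, ← smul_mul_assoc,
    smul_monomial, smul_eq_mul, mul_one]

theorem Dop_mul_Dpow (i : Fin n) (b : Fin n →₀ ℕ) :
    Dop K i * Dpow K b = Dpow K ⇑(Finsupp.single i 1 + b : Fin n →₀ ℕ) := by
  rw [Finsupp.coe_add, Dpow_add, Finsupp.single_eq_pi_single, Dpow_single, pow_one]

theorem Xpow_mem_WeylAlg (a : Fin n → ℕ) : Xpow K a ∈ WeylAlg K n :=
  Subalgebra.list_prod_mem _ fun _ hx => by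
    obtain ⟨i, rfl⟩ := List.mem_ofFn.mp hx
    exact pow_mem (Algebra.subset_adjoin (Set.mem_union_left _ (Set.mem_range_self i))) _

theorem Dpow_mem_WeylAlg (b : Fin n → ℕ) : Dpow K b ∈ WeylAlg K n :=
  Subalgebra.list_prod_mem _ fun _ hx => by
    obtain ⟨i, rfl⟩ := List.mem_ofFn.mp hx
    exact pow_mem (Algebra.subset_adjoin (Set.mem_union_right _ (Set.mem_range_self i))) _

theorem toSubmodule_WeylAlg_eq_span :
    Subalgebra.toSubmodule (WeylAlg K n) = Submodule.span K
      (Set.range fun p : (Fin n →₀ ℕ) × (Fin n →₀ ℕ) => Xpow K p.1 * Dpow K p.2) := by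
  set S := Submodule.span K
    (Set.range fun p : (Fin n →₀ ℕ) × (Fin n →₀ ℕ) => Xpow K p.1 * Dpow K p.2)
  have mem (a b : Fin n →₀ ℕ) : Xpow K a * Dpow K b ∈ S := Submodule.subset_span ⟨(a, b), rfl⟩
  have mul_mem_of (g) (hg : ∀ a b : Fin n →₀ ℕ, g * (Xpow K a * Dpow K b) ∈ S) :
      ∀ y ∈ S, g * y ∈ S := fun y hy =>
    (Submodule.span_le (p := S.comap (LinearMap.mulLeft K g))).mpr
      (by rintro _ ⟨⟨a, b⟩, rfl⟩; exact hg a b) hy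
  apply le_antisymm
  · refine Algebra.adjoin_le_of_mul_mem (by simpa [Xpow_zero, Dpow_zero] using mem 0 0) ?_
    rintro _ (⟨i, rfl⟩ | ⟨i, rfl⟩) <;> refine mul_mem_of _ fun a b => ?_
    · rw [← mul_assoc, Xop_mul_Xpow]
      exact mem _ _
    · rw [← mul_assoc, Dop_mul_Xpow, add_mul, mul_assoc, Dop_mul_Dpow, smul_mul_assoc]
      exact S.add_mem (mem _ _) (S.smul_mem _ (mem _ _))
  · rw [Submodule.span_le]
    rintro _ ⟨⟨a, b⟩, rfl⟩
    exact (WeylAlg K n).mul_mem (Xpow_mem_WeylAlg a) (Dpow_mem_WeylAlg b)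

end

theorem weyl_monomials_linearIndependent_general (K : Type) [Field K] [CharZero K]
    (n : ℕ) :
    LinearIndependent K
      (fun p : (Fin n → ℕ) × (Fin n → ℕ) => Xpow K p.1 * Dpow K p.2) ∧
    Subalgebra.toSubmodule (WeylAlg K n) =
      Submodule.span K
        (Set.range fun p : (Fin n → ℕ) × (Fin n → ℕ) => Xpow K p.1 * Dpow K p.2) := by
  let e : (Fin n → ℕ) ≃ (Fin n →₀ ℕ) := Finsupp.equivFunOnFinite.symm
  have reindex : (fun p : (Fin n → ℕ) × (Fin n → ℕ) => Xpow K p.1 * Dpow K p.2)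
      = (fun q : (Fin n →₀ ℕ) × (Fin n →₀ ℕ) => Xpow K q.1 * Dpow K q.2) ∘ e.prodCongr e := rfl
  rw [reindex, EquivLike.range_comp]
  exact ⟨linearIndependent_Xpow_mul_Dpow.comp _ (Equiv.injective _), toSubmodule_WeylAlg_eq_span⟩

/-- The family `{X^a ∘ D^b : a, b ∈ ℕ^n}` is linearly independent over
`K` in `End_K(K[x_1,…,x_n])`; consequently every element of `A_n` has a unique
representation `Σ c_{a,b} X^a ∘ D^b` (the family is moreover a spanning set of `A_n`). -/
theorem weyl_monomials_linearIndependent (K : Type) [Field K] [CharZero K]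
    (n : ℕ) (hn : 0 < n) :
    LinearIndependent K
      (fun p : (Fin n → ℕ) × (Fin n → ℕ) => Xpow K p.1 * Dpow K p.2) ∧
    Subalgebra.toSubmodule (WeylAlg K n) =
      Submodule.span K
        (Set.range fun p : (Fin n → ℕ) × (Fin n → ℕ) => Xpow K p.1 * Dpow K p.2) :=
  weyl_monomials_linearIndependent_general K n
end

section
/- Let ≤ be a linear order on ℤ^n that is translation-invariant (z ≤ z' implies z + w ≤ z' + w for all w). For a nonzero F ∈ A_n, write F = Σ_z F_z with F_z ∈ A_n^{(z)} (finitely many nonzero) and let topdeg(F) be the ≤-maximal z with F_z ≠ 0 and lowdeg(F) the ≤-minimal such z. Then for all nonzero P, Q ∈ A_n: the (topdeg(P)+topdeg(Q))-graded component of P ∘ Q equals P_{topdeg(P)} ∘ Q_{topdeg(Q)} and is nonzero, and the (lowdeg(P)+lowdeg(Q))-graded component of P ∘ Q equals P_{lowdeg(P)} ∘ Q_{lowdeg(Q)} and is nonzero; in particular topdeg(P∘Q) = topdeg(P) + topdeg(Q) and lowdeg(P∘Q) = lowdeg(P) + lowdeg(Q). -/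
/-!
An operator `F` is homogeneous of degree `z ∈ ℤ^n` with symbol `f ∈ K[t_1,…,t_n]` if
`F (x^u) = f(u) x^{u-z}` for all `u ∈ ℕ^n`, where `f(u) = 0` unless `u ≥ z`. `X_i` has degree
`-e_i` and symbol `1`, `D_i` has degree `e_i` and symbol `t_i`, and if `F, G` have degrees `z, w`
and symbols `f, g` then `F ∘ G` has degree `z + w` and symbol `g(t) f(t - w)`; hence every element
of `A_n^{(z)}` has a symbol. Since `K` has characteristic zero, a polynomial vanishing on `ℕ^n` is
zero, so a homogeneous operator vanishes iff its symbol does, and a product of nonzero homogeneous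
operators is nonzero.

Comparing the coefficients of `x^{u-z}` shows that graded decompositions are unique. Hence the
decomposition of `P ∘ Q` is the convolution of those of `P` and `Q`, i.e. their product in the
monoid algebra of `ℤ^n` over `End(K[x])`. For a translation-invariant linear order,
`topdeg P + topdeg Q` is reached by a unique pair of degrees of `P` and `Q`, which gives the top
component; the lowest degree is the top degree for the reversed order.
-/

open MvPolynomial

section TranslationInvariantOrder

variable {G : Type*} [AddCancelCommMonoid G] {r : G → G → Prop}

lemma uniqueAdd_of_forall_rel [Std.Antisymm r] (hr : ∀ a b c, r a b → r (a + c) (b + c))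
    {A B : Finset G} {a₀ b₀ : G} (hA : ∀ a ∈ A, r a a₀) (hB : ∀ b ∈ B, r b b₀) :
    UniqueAdd A B a₀ b₀ := by
  intro a b ha hb hab
  have h₁ : r (a₀ + b) (a₀ + b₀) := by simpa only [add_comm a₀] using hr b b₀ a₀ (hB b hb)
  have h₂ : r (a₀ + b₀) (a₀ + b) := hab ▸ hr a a₀ b (hA a ha)
  obtain rfl : b = b₀ := add_left_cancel (antisymm h₁ h₂)
  exact ⟨add_right_cancel hab, rfl⟩

lemma rel_add_add [IsTrans G r] (hr : ∀ a b c, r a b → r (a + c) (b + c)) {a b a₀ b₀ : G}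
    (ha : r a a₀) (hb : r b b₀) : r (a + b) (a₀ + b₀) :=
  _root_.trans (hr a a₀ b ha) (by simpa only [add_comm a₀] using hr b b₀ a₀ hb)

end TranslationInvariantOrder

namespace AddMonoidAlgebra

variable {R G : Type*} [Semiring R]

lemma sum_coeff_mul [AddMonoid G] (f g : AddMonoidAlgebra R G) :
    (f * g).coeff.sum (fun _ r ↦ r) = f.coeff.sum (fun _ r ↦ r) * g.coeff.sum (fun _ r ↦ r) := by
  let φ := liftNCRingHom (RingHom.id R) (1 : Multiplicative G →* R) fun _ _ ↦ Commute.one_right _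
  have hφ (x : AddMonoidAlgebra R G) : φ x = x.coeff.sum fun _ r ↦ r := by
    conv_lhs => rw [← sum_coeff_single x, map_finsuppSum]
    simp only [φ, liftNCRingHom_single, RingHom.id_apply, MonoidHom.one_apply, mul_one]
  simpa only [hφ] using map_mul φ f g

lemma coeff_mul_mem_of_graded [Add G] {S : Type*} [SetLike S R] [AddSubmonoidClass S R]
    {A : G → S} [SetLike.GradedMul A] {f g : AddMonoidAlgebra R G} (hf : ∀ a, f.coeff a ∈ A a)
    (hg : ∀ b, g.coeff b ∈ A b) (c : G) : (f * g).coeff c ∈ A c := by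
  classical
  rw [coeff_mul]
  refine sum_mem fun a _ ↦ sum_mem fun b _ ↦ ?_
  dsimp only
  split_ifs with h
  · exact h ▸ SetLike.GradedMul.mul_mem (hf a) (hg b)
  · exact zero_mem _

variable [AddCancelCommMonoid G] {r : G → G → Prop} {f g : AddMonoidAlgebra R G} {a₀ b₀ : G}

lemma coeff_mul_add_of_forall_rel [Std.Antisymm r] (hr : ∀ a b c, r a b → r (a + c) (b + c))
    (hf : ∀ a, f.coeff a ≠ 0 → r a a₀) (hg : ∀ b, g.coeff b ≠ 0 → r b b₀) :
    (f * g).coeff (a₀ + b₀) = f.coeff a₀ * g.coeff b₀ :=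
  coeff_mul_add_of_uniqueAdd <| uniqueAdd_of_forall_rel hr
    (fun a ha ↦ hf a (Finsupp.mem_support_iff.mp ha))
    (fun b hb ↦ hg b (Finsupp.mem_support_iff.mp hb))

lemma rel_of_coeff_mul_ne_zero [IsTrans G r] (hr : ∀ a b c, r a b → r (a + c) (b + c))
    (hf : ∀ a, f.coeff a ≠ 0 → r a a₀) (hg : ∀ b, g.coeff b ≠ 0 → r b b₀) {c : G}
    (hc : (f * g).coeff c ≠ 0) : r c (a₀ + b₀) := by
  classical
  obtain ⟨a, ha, b, hb, rfl⟩ :=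
    Finset.mem_add.mp (support_coeff_mul_subset f g (Finsupp.mem_support_iff.mpr hc))
  exact rel_add_add hr (hf a (Finsupp.mem_support_iff.mp ha)) (hg b (Finsupp.mem_support_iff.mp hb))

end AddMonoidAlgebra

namespace WeylAlgebra

open Finsupp

variable {K : Type} [Field K] {n : ℕ}

noncomputable def expShift (z : Fin n → ℤ) (u : Fin n →₀ ℕ) : Fin n →₀ ℕ :=
  equivFunOnFinite.symm fun i => ((u i : ℤ) - z i).toNat

@[simp]
lemma expShift_apply (z : Fin n → ℤ) (u : Fin n →₀ ℕ) (i : Fin n) :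
    expShift z u i = ((u i : ℤ) - z i).toNat := rfl

lemma expShift_expShift {z w : Fin n → ℤ} {u : Fin n →₀ ℕ} (hu : ∀ i, w i ≤ u i) :
    expShift z (expShift w u) = expShift (z + w) u := by
  ext i
  simp only [expShift_apply, Pi.add_apply]
  have := hu i
  omega

lemma eq_of_expShift_eq {z z' : Fin n → ℤ} {u : Fin n →₀ ℕ} (hz : ∀ i, z i ≤ u i)
    (hz' : ∀ i, z' i ≤ u i) (h : expShift z u = expShift z' u) : z = z' := by
  funext i
  have := DFunLike.congr_fun h i
  simp only [expShift_apply] at this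
  have := hz i
  have := hz' i
  omega

noncomputable def shiftPoly (w : Fin n → ℤ) (f : MvPolynomial (Fin n) K) : MvPolynomial (Fin n) K :=
  bind₁ (fun i ↦ X i - C (w i : K)) f

lemma eval_shiftPoly (w : Fin n → ℤ) (f : MvPolynomial (Fin n) K) (x : Fin n → K) :
    eval x (shiftPoly w f) = eval (fun i ↦ x i - w i) f := by
  have h := aeval_bind₁ x (fun i ↦ X i - C (w i : K)) f
  simp only [aeval_eq_eval] at h
  rw [shiftPoly, h]
  congr
  funext i
  simp

lemma eval_shiftPoly_natCast (w : Fin n → ℤ) (f : MvPolynomial (Fin n) K) {u : Fin n →₀ ℕ}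
    (hu : ∀ i, w i ≤ u i) :
    eval (Nat.cast ∘ u) (shiftPoly w f) = eval (Nat.cast ∘ expShift w u) f := by
  rw [eval_shiftPoly]
  congr
  funext i
  have h : (((u i : ℤ) - w i).toNat : ℤ) = u i - w i := Int.toNat_of_nonneg (sub_nonneg.mpr (hu i))
  simp only [Function.comp_apply, expShift_apply]
  rw [← Int.cast_natCast (R := K) (((u i : ℤ) - w i).toNat), h]
  push_cast
  ring

lemma shiftPoly_ne_zero [CharZero K] (w : Fin n → ℤ) {f : MvPolynomial (Fin n) K} (hf : f ≠ 0) :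
    shiftPoly w f ≠ 0 := by
  refine fun h ↦ hf (funext fun x ↦ ?_)
  simpa [eval_shiftPoly] using congr_arg (eval (fun i ↦ x i + w i)) h

lemma eq_zero_of_eval_natCast_eq_zero [CharZero K] {f : MvPolynomial (Fin n) K}
    (hf : ∀ u : Fin n →₀ ℕ, eval (Nat.cast ∘ u) f = 0) : f = 0 := by
  refine funext_set (fun _ ↦ Set.range ((↑) : ℕ → K))
    (fun _ ↦ Set.infinite_range_of_injective Nat.cast_injective) fun x hx ↦ ?_
  choose v hv using fun i ↦ hx i (Set.mem_univ i)
  simpa [show x = Nat.cast ∘ equivFunOnFinite.symm v from funext fun i ↦ (hv i).symm]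
    using hf (equivFunOnFinite.symm v)

structure HasSymbol (z : Fin n → ℤ) (f : MvPolynomial (Fin n) K)
    (F : Module.End K (MvPolynomial (Fin n) K)) : Prop where
  apply_monomial (u : Fin n →₀ ℕ) :
    F (monomial u 1) = monomial (expShift z u) (eval (Nat.cast ∘ u) f)
  eval_eq_zero (u : Fin n →₀ ℕ) (i : Fin n) (hi : (u i : ℤ) < z i) : eval (Nat.cast ∘ u) f = 0

namespace HasSymbol

variable {z w : Fin n → ℤ} {f g : MvPolynomial (Fin n) K}
  {F G : Module.End K (MvPolynomial (Fin n) K)}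

lemma zero (z : Fin n → ℤ) : HasSymbol (K := K) z 0 0 :=
  ⟨fun _ ↦ by simp, fun _ _ _ ↦ by simp⟩

lemma add (hF : HasSymbol z f F) (hG : HasSymbol z g G) : HasSymbol z (f + g) (F + G) :=
  ⟨fun u ↦ by simp [hF.apply_monomial, hG.apply_monomial],
    fun u i hi ↦ by simp [hF.eval_eq_zero u i hi, hG.eval_eq_zero u i hi]⟩

lemma smul (c : K) (hF : HasSymbol z f F) : HasSymbol z (c • f) (c • F) :=
  ⟨fun u ↦ by simp [hF.apply_monomial, smul_monomial],
    fun u i hi ↦ by simp [hF.eval_eq_zero u i hi]⟩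

lemma one : HasSymbol (K := K) (n := n) 0 1 1 :=
  ⟨fun u ↦ by simp [show expShift 0 u = u by ext; simp], fun u i hi ↦ by simp at hi; omega⟩

lemma mul (hF : HasSymbol z f F) (hG : HasSymbol w g G) :
    HasSymbol (z + w) (g * shiftPoly w f) (F * G) := by
  have eval_mul (u : Fin n →₀ ℕ) (hu : ∀ i, w i ≤ u i) :
      eval (Nat.cast ∘ u) (g * shiftPoly w f) =
        eval (Nat.cast ∘ u) g * eval (Nat.cast ∘ expShift w u) f := by
    rw [map_mul, eval_shiftPoly_natCast w f hu]
  constructor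
  · intro u
    by_cases! hu : ∀ i, w i ≤ u i
    · rw [Module.End.mul_apply, hG.apply_monomial, ← mul_one (eval _ g), ← smul_eq_mul,
        ← smul_monomial, map_smul, hF.apply_monomial, smul_monomial, smul_eq_mul,
        expShift_expShift hu, eval_mul u hu]
    · obtain ⟨i, hi⟩ := hu
      simp [hG.apply_monomial, hG.eval_eq_zero u i hi]
  · intro u i hi
    by_cases! hu : ∀ i, w i ≤ u i
    · have hi' : (expShift w u i : ℤ) < z i := by
        simp only [expShift_apply, Pi.add_apply] at hi ⊢
        have := hu i
        omega
      rw [eval_mul u hu, hF.eval_eq_zero _ i hi', mul_zero]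
    · obtain ⟨j, hj⟩ := hu
      simp [hG.eval_eq_zero u j hj]

lemma eq_zero_iff (hF : HasSymbol z f F) :
    F = 0 ↔ ∀ u : Fin n →₀ ℕ, eval (Nat.cast ∘ u) f = 0 := by
  constructor
  · rintro rfl u
    simpa using (hF.apply_monomial u).symm
  · intro hf
    refine linearMap_ext fun u ↦ LinearMap.ext fun c ↦ ?_
    rw [LinearMap.comp_apply, ← mul_one c, ← smul_eq_mul, ← smul_monomial, map_smul,
      hF.apply_monomial, hf]
    simp

lemma symbol_ne_zero (hF : HasSymbol z f F) (hF0 : F ≠ 0) : f ≠ 0 := by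
  rintro rfl
  exact hF0 (hF.eq_zero_iff.mpr fun u ↦ map_zero _)

end HasSymbol

variable (K) in
def symbolPart (z : Fin n → ℤ) : Submodule K (Module.End K (MvPolynomial (Fin n) K)) where
  carrier := {F | ∃ f, HasSymbol z f F}
  zero_mem' := ⟨0, HasSymbol.zero z⟩
  add_mem' := fun ⟨f, hf⟩ ⟨g, hg⟩ ↦ ⟨f + g, hf.add hg⟩
  smul_mem' := fun c _ ⟨f, hf⟩ ↦ ⟨c • f, hf.smul c⟩

instance : SetLike.GradedMonoid (symbolPart K (n := n)) where
  one_mem := ⟨1, HasSymbol.one⟩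
  mul_mem := fun _ _ _ _ ⟨_, hf⟩ ⟨_, hg⟩ ↦ ⟨_, hf.mul hg⟩

lemma Xop_mem_symbolPart (i : Fin n) : Xop K i ∈ symbolPart K (-Pi.single i 1) := by
  refine ⟨1, fun u ↦ ?_, fun u j hj ↦ ?_⟩
  · have : expShift (-Pi.single i 1) u = u + Finsupp.single i 1 := by
      ext j
      obtain rfl | h := eq_or_ne j i <;> simp [*]
    simp [Xop, X, monomial_mul, this, add_comm]
  · obtain rfl | h := eq_or_ne j i <;> simp_all <;> omega

lemma Dop_mem_symbolPart (i : Fin n) : Dop K i ∈ symbolPart K (Pi.single i 1) := by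
  refine ⟨X i, fun u ↦ ?_, fun u j hj ↦ ?_⟩
  · have : expShift (Pi.single i 1) u = u - Finsupp.single i 1 := by
      ext j
      obtain rfl | h := eq_or_ne j i <;> simp [*]
    simp [Dop, pderiv_monomial, this]
  · obtain rfl | h := eq_or_ne j i
    · simp_all
    · simp only [Pi.single_apply, h, if_false] at hj
      omega

lemma list_ofFn_prod_mem_symbolPart {z : Fin n → Fin n → ℤ}
    {F : Fin n → Module.End K (MvPolynomial (Fin n) K)} (hF : ∀ i, F i ∈ symbolPart K (z i)) :
    (List.ofFn F).prod ∈ symbolPart K (∑ i, z i) := by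
  have := SetLike.list_prod_map_mem_graded (List.finRange n) z F fun i _ ↦ hF i
  rwa [← List.ofFn_eq_map, ← List.ofFn_eq_map, List.sum_ofFn] at this

lemma Xpow_mem_symbolPart (a : Fin n → ℕ) : Xpow K a ∈ symbolPart K (-(Nat.cast ∘ a)) := by
  rw [Xpow]
  convert list_ofFn_prod_mem_symbolPart fun i ↦
    SetLike.pow_mem_graded (a i) (Xop_mem_symbolPart (K := K) i)
  funext j
  simp [Finset.sum_apply, Pi.single_apply]

lemma Dpow_mem_symbolPart (b : Fin n → ℕ) : Dpow K b ∈ symbolPart K (Nat.cast ∘ b) := by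
  rw [Dpow]
  convert list_ofFn_prod_mem_symbolPart fun i ↦
    SetLike.pow_mem_graded (b i) (Dop_mem_symbolPart (K := K) i)
  funext j
  simp [Finset.sum_apply, Pi.single_apply]

lemma gradePart_le_symbolPart (z : Fin n → ℤ) : gradePart K z ≤ symbolPart K z := by
  refine Submodule.span_le.mpr ?_
  rintro _ ⟨a, b, hab, rfl⟩
  show _ ∈ symbolPart K z
  convert SetLike.mul_mem_graded (Xpow_mem_symbolPart (K := K) a) (Dpow_mem_symbolPart b)
  funext i
  simp [← hab i, neg_add_eq_sub]

lemma mul_ne_zero_of_mem_symbolPart [CharZero K] {z w : Fin n → ℤ}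
    {F G : Module.End K (MvPolynomial (Fin n) K)} (hF : F ∈ symbolPart K z)
    (hG : G ∈ symbolPart K w) (hF0 : F ≠ 0) (hG0 : G ≠ 0) : F * G ≠ 0 := by
  obtain ⟨f, hf⟩ := hF
  obtain ⟨g, hg⟩ := hG
  rw [Ne, (hf.mul hg).eq_zero_iff]
  exact fun h ↦ mul_ne_zero (hg.symbol_ne_zero hG0)
    (shiftPoly_ne_zero w (hf.symbol_ne_zero hF0)) (eq_zero_of_eval_natCast_eq_zero h)

lemma eq_zero_of_sum_eq_zero {Gc : (Fin n → ℤ) →₀ Module.End K (MvPolynomial (Fin n) K)}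
    (hG : ∀ z, Gc z ∈ symbolPart K z) (hsum : Gc.sum (fun _ F ↦ F) = 0) : Gc = 0 := by
  classical
  choose g hg using hG
  ext z₀ : 1
  refine (hg z₀).eq_zero_iff.mpr fun u ↦ ?_
  by_cases! hu : ∀ i, z₀ i ≤ u i
  swap
  · obtain ⟨i, hi⟩ := hu
    exact (hg z₀).eval_eq_zero u i hi
  by_cases hz₀ : Gc z₀ = 0
  · exact (hg z₀).eq_zero_iff.mp hz₀ u
  have happ := congr_arg (fun F ↦ coeff (expShift z₀ u) (F (monomial u 1))) hsum
  simp only [Finsupp.sum, LinearMap.coe_sum, Finset.sum_apply, fun z ↦ (hg z).apply_monomial u,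
    coeff_sum, coeff_monomial, LinearMap.zero_apply, coeff_zero] at happ
  rwa [Finset.sum_eq_single_of_mem z₀ (Finsupp.mem_support_iff.mpr hz₀), if_pos rfl] at happ
  intro z _ hz
  by_cases! hzu : ∀ i, z i ≤ u i
  · rw [if_neg fun h ↦ hz (eq_of_expShift_eq hzu hu h)]
  · obtain ⟨i, hi⟩ := hzu
    rw [(hg z).eval_eq_zero u i hi, ite_self]

open AddMonoidAlgebra in
lemma eq_coeff_mul_of_sum_eq {Pc Qc Rc : (Fin n → ℤ) →₀ Module.End K (MvPolynomial (Fin n) K)}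
    (hP : ∀ z, Pc z ∈ symbolPart K z) (hQ : ∀ z, Qc z ∈ symbolPart K z)
    (hR : ∀ z, Rc z ∈ symbolPart K z)
    (hsum : Rc.sum (fun _ F ↦ F) = Pc.sum (fun _ F ↦ F) * Qc.sum (fun _ F ↦ F)) :
    Rc = (ofCoeff Pc * ofCoeff Qc).coeff := by
  rw [← sub_eq_zero]
  refine eq_zero_of_sum_eq_zero (fun z ↦ sub_mem (hR z) (coeff_mul_mem_of_graded hP hQ z)) ?_
  rw [Finsupp.sum_sub_index fun _ _ _ ↦ rfl, hsum, sum_coeff_mul, sub_self]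

end WeylAlgebra

open WeylAlgebra AddMonoidAlgebra

theorem graded_top_low_degree_multiplicative_general (K : Type) [Field K] [CharZero K]
    (n : ℕ)
    (r : (Fin n → ℤ) → (Fin n → ℤ) → Prop) (hlin : IsLinearOrder (Fin n → ℤ) r)
    (hmono : ∀ z z' w : Fin n → ℤ, r z z' → r (z + w) (z' + w))
    (P Q : Module.End K (MvPolynomial (Fin n) K))
    (Pc Qc Rc : (Fin n → ℤ) →₀ Module.End K (MvPolynomial (Fin n) K))
    (hPg : ∀ z, Pc z ∈ gradePart K z) (hQg : ∀ z, Qc z ∈ gradePart K z)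
    (hRg : ∀ z, Rc z ∈ gradePart K z)
    (hPsum : P = Pc.sum fun _ F => F) (hQsum : Q = Qc.sum fun _ F => F)
    (hRsum : P * Q = Rc.sum fun _ F => F)
    (tP lP tQ lQ : Fin n → ℤ)
    (htP : Pc tP ≠ 0 ∧ ∀ z, Pc z ≠ 0 → r z tP)
    (hlP : Pc lP ≠ 0 ∧ ∀ z, Pc z ≠ 0 → r lP z)
    (htQ : Qc tQ ≠ 0 ∧ ∀ z, Qc z ≠ 0 → r z tQ)
    (hlQ : Qc lQ ≠ 0 ∧ ∀ z, Qc z ≠ 0 → r lQ z) :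
    (Rc (tP + tQ) = Pc tP * Qc tQ ∧ Rc (tP + tQ) ≠ 0) ∧
    (Rc (lP + lQ) = Pc lP * Qc lQ ∧ Rc (lP + lQ) ≠ 0) ∧
    (∀ z, Rc z ≠ 0 → r z (tP + tQ)) ∧
    (∀ z, Rc z ≠ 0 → r (lP + lQ) z) := by
  have hP z := gradePart_le_symbolPart z (hPg z)
  have hQ z := gradePart_le_symbolPart z (hQg z)
  obtain rfl : Rc = (ofCoeff Pc * ofCoeff Qc).coeff :=
    eq_coeff_mul_of_sum_eq hP hQ (fun z ↦ gradePart_le_symbolPart z (hRg z))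
      (by rw [← hRsum, hPsum, hQsum])
  have hmono' : ∀ z z' w, Function.swap r z z' → Function.swap r (z + w) (z' + w) :=
    fun z z' w ↦ hmono z' z w
  have htop := coeff_mul_add_of_forall_rel (f := ofCoeff Pc) (g := ofCoeff Qc) hmono htP.2 htQ.2
  have hlow := coeff_mul_add_of_forall_rel (f := ofCoeff Pc) (g := ofCoeff Qc) hmono' hlP.2 hlQ.2
  refine ⟨⟨htop, htop ▸ mul_ne_zero_of_mem_symbolPart (hP _) (hQ _) htP.1 htQ.1⟩,
    ⟨hlow, hlow ▸ mul_ne_zero_of_mem_symbolPart (hP _) (hQ _) hlP.1 hlQ.1⟩,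
    fun z ↦ rel_of_coeff_mul_ne_zero hmono htP.2 htQ.2,
    fun z ↦ rel_of_coeff_mul_ne_zero hmono' hlP.2 hlQ.2⟩

/-- Let `r` be a translation-invariant linear order on `ℤ^n`.  For
nonzero `P, Q ∈ A_n` with graded decompositions `P = Σ_z Pc z`, `Q = Σ_z Qc z` and any
graded decomposition `Rc` of `P ∘ Q`, the component of `P ∘ Q` in degree
`topdeg(P)+topdeg(Q)` equals `P_{topdeg P} ∘ Q_{topdeg Q}` and is nonzero, similarly for
the lowest degrees; in particular `topdeg(P∘Q) = topdeg(P)+topdeg(Q)` and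
`lowdeg(P∘Q) = lowdeg(P)+lowdeg(Q)`. -/
theorem graded_top_low_degree_multiplicative (K : Type) [Field K] [CharZero K]
    (n : ℕ) (hn : 0 < n)
    (r : (Fin n → ℤ) → (Fin n → ℤ) → Prop) (hlin : IsLinearOrder (Fin n → ℤ) r)
    (hmono : ∀ z z' w : Fin n → ℤ, r z z' → r (z + w) (z' + w))
    (P Q : Module.End K (MvPolynomial (Fin n) K)) (hP0 : P ≠ 0) (hQ0 : Q ≠ 0)
    (Pc Qc Rc : (Fin n → ℤ) →₀ Module.End K (MvPolynomial (Fin n) K))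
    (hPg : ∀ z, Pc z ∈ gradePart K z) (hQg : ∀ z, Qc z ∈ gradePart K z)
    (hRg : ∀ z, Rc z ∈ gradePart K z)
    (hPsum : P = Pc.sum fun _ F => F) (hQsum : Q = Qc.sum fun _ F => F)
    (hRsum : P * Q = Rc.sum fun _ F => F)
    (tP lP tQ lQ : Fin n → ℤ)
    (htP : Pc tP ≠ 0 ∧ ∀ z, Pc z ≠ 0 → r z tP)
    (hlP : Pc lP ≠ 0 ∧ ∀ z, Pc z ≠ 0 → r lP z)
    (htQ : Qc tQ ≠ 0 ∧ ∀ z, Qc z ≠ 0 → r z tQ)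
    (hlQ : Qc lQ ≠ 0 ∧ ∀ z, Qc z ≠ 0 → r lQ z) :
    (Rc (tP + tQ) = Pc tP * Qc tQ ∧ Rc (tP + tQ) ≠ 0) ∧
    (Rc (lP + lQ) = Pc lP * Qc lQ ∧ Rc (lP + lQ) ≠ 0) ∧
    (∀ z, Rc z ≠ 0 → r z (tP + tQ)) ∧
    (∀ z, Rc z ≠ 0 → r (lP + lQ) z) :=
  graded_top_low_degree_multiplicative_general K n r hlin hmono P Q Pc Qc Rc hPg hQg hRg hPsum hQsum
    hRsum tP lP tQ lQ htP hlP htQ hlQ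
end
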